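/- arXiv:math/0406281 — 3 statements merged into one kernel-verified Lean document; each statement's English description precedes it below -/
import Mathlib

section
/- For matrices M₁, M₂, M₃ ∈ SL(2,ℂ), setting M₄ = (M₃M₂M₁)⁻¹, mᵢ = Tr(Mᵢ) and m_{ij} = Tr(MᵢMⱼ), one has the identity Tr((M₂M₁M₂⁻¹)·M₃) = m₂m₄ + m₁m₃ − m₁₃ − m₁₂m₂₃. -/
open Matrix

/-- For `M₁, M₂, M₃ ∈ SL(2,ℂ)`, with `M₄ = (M₃M₂M₁)⁻¹`, `mᵢ = Tr(Mᵢ)`,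
`m_{ij} = Tr(MᵢMⱼ)`, one has
`Tr((M₂M₁M₂⁻¹)M₃) = m₂m₄ + m₁m₃ − m₁₃ − m₁₂m₂₃`. -/
theorem braid_trace_identity
    (M₁ M₂ M₃ : Matrix.SpecialLinearGroup (Fin 2) ℂ)
    (M₄ : Matrix.SpecialLinearGroup (Fin 2) ℂ) (hM₄ : M₄ = (M₃ * M₂ * M₁)⁻¹) :
    Matrix.trace ((M₂ * M₁ * M₂⁻¹ * M₃ : Matrix.SpecialLinearGroup (Fin 2) ℂ) :
        Matrix (Fin 2) (Fin 2) ℂ)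
      = Matrix.trace (M₂ : Matrix (Fin 2) (Fin 2) ℂ) *
          Matrix.trace (M₄ : Matrix (Fin 2) (Fin 2) ℂ)
        + Matrix.trace (M₁ : Matrix (Fin 2) (Fin 2) ℂ) *
            Matrix.trace (M₃ : Matrix (Fin 2) (Fin 2) ℂ)
        - Matrix.trace ((M₁ * M₃ : Matrix.SpecialLinearGroup (Fin 2) ℂ) :
            Matrix (Fin 2) (Fin 2) ℂ)
        - Matrix.trace ((M₁ * M₂ : Matrix.SpecialLinearGroup (Fin 2) ℂ) :
              Matrix (Fin 2) (Fin 2) ℂ) *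
            Matrix.trace ((M₂ * M₃ : Matrix.SpecialLinearGroup (Fin 2) ℂ) :
              Matrix (Fin 2) (Fin 2) ℂ) := by
  subst hM₄
  simp only [Matrix.SpecialLinearGroup.coe_mul, Matrix.SpecialLinearGroup.coe_inv]
  obtain ⟨A, hA⟩ := M₁
  obtain ⟨B, hB⟩ := M₂
  obtain ⟨C, hC⟩ := M₃
  rw [Matrix.det_fin_two] at hA hB hC
  simp [Matrix.trace_fin_two, Matrix.mul_apply, Matrix.adjugate_fin_two,
    Fin.sum_univ_two]
  ring_nf
  linear_combination (A 0 0 * C 1 1 - C 1 0 * A 0 1 + C 0 0 * A 1 1 - C 0 1 * A 1 0) * hB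
end

section
/- The mapping-class group action ω₁ on trace seven-tuples preserves the local traces of the braid-transformed triple: if M₁, M₂, M₃ ∈ SL(2,ℂ) and (M₁', M₂', M₃') = (M₂, M₂M₁M₂⁻¹, M₃), then Tr(M₁') = Tr(M₂), Tr(M₂') = Tr(M₁), Tr(M₃') = Tr(M₃), Tr((M₃'M₂'M₁')⁻¹) = Tr((M₃M₂M₁)⁻¹), Tr(M₁'M₂') = Tr(M₁M₂), Tr(M₂'M₃') = Tr(M₂)Tr((M₃M₂M₁)⁻¹) + Tr(M₁)Tr(M₃) − Tr(M₁M₃) − Tr(M₁M₂)Tr(M₂M₃), and Tr(M₁'M₃') = Tr(M₂M₃). -/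
open Matrix

/-- Trace of an element of `SL(2,ℂ)`. -/
noncomputable def trSL (M : Matrix.SpecialLinearGroup (Fin 2) ℂ) : ℂ :=
  Matrix.trace (M : Matrix (Fin 2) (Fin 2) ℂ)

/-- The braid move `ω₁ : (M₁,M₂,M₃) ↦ (M₂, M₂M₁M₂⁻¹, M₃)` acts on the seven-tuple of
traces `(m₁,m₂,m₃,m₄,m₁₂,m₂₃,m₁₃)` by
`(m₂, m₁, m₃, m₄, m₁₂, m₂m₄ + m₁m₃ − m₁₃ − m₁₂m₂₃, m₂₃)`. -/
theorem braid_move_on_traces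
    (M₁ M₂ M₃ : Matrix.SpecialLinearGroup (Fin 2) ℂ)
    (M₁' M₂' M₃' : Matrix.SpecialLinearGroup (Fin 2) ℂ)
    (h₁ : M₁' = M₂) (h₂ : M₂' = M₂ * M₁ * M₂⁻¹) (h₃ : M₃' = M₃) :
    trSL M₁' = trSL M₂ ∧
    trSL M₂' = trSL M₁ ∧
    trSL M₃' = trSL M₃ ∧
    trSL (M₃' * M₂' * M₁')⁻¹ = trSL (M₃ * M₂ * M₁)⁻¹ ∧
    trSL (M₁' * M₂') = trSL (M₁ * M₂) ∧
    trSL (M₂' * M₃') =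
      trSL M₂ * trSL (M₃ * M₂ * M₁)⁻¹ + trSL M₁ * trSL M₃
        - trSL (M₁ * M₃) - trSL (M₁ * M₂) * trSL (M₂ * M₃) ∧
    trSL (M₁' * M₃') = trSL (M₂ * M₃) := by
  rw [h₁, h₂, h₃]
  have e4 : M₃ * (M₂ * M₁ * M₂⁻¹) * M₂ = M₃ * M₂ * M₁ := by group
  have hdet : ((M₂ : Matrix (Fin 2) (Fin 2) ℂ)).det = 1 := M₂.2
  rw [Matrix.det_fin_two] at hdet
  set a1 := (M₁ : Matrix (Fin 2) (Fin 2) ℂ) 0 0 with ha1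
  set b1 := (M₁ : Matrix (Fin 2) (Fin 2) ℂ) 0 1 with hb1
  set c1 := (M₁ : Matrix (Fin 2) (Fin 2) ℂ) 1 0 with hc1
  set d1 := (M₁ : Matrix (Fin 2) (Fin 2) ℂ) 1 1 with hd1
  set a2 := (M₂ : Matrix (Fin 2) (Fin 2) ℂ) 0 0 with ha2
  set b2 := (M₂ : Matrix (Fin 2) (Fin 2) ℂ) 0 1 with hb2
  set c2 := (M₂ : Matrix (Fin 2) (Fin 2) ℂ) 1 0 with hc2
  set d2 := (M₂ : Matrix (Fin 2) (Fin 2) ℂ) 1 1 with hd2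
  set a3 := (M₃ : Matrix (Fin 2) (Fin 2) ℂ) 0 0 with ha3
  set b3 := (M₃ : Matrix (Fin 2) (Fin 2) ℂ) 0 1 with hb3
  set c3 := (M₃ : Matrix (Fin 2) (Fin 2) ℂ) 1 0 with hc3
  set d3 := (M₃ : Matrix (Fin 2) (Fin 2) ℂ) 1 1 with hd3
  refine ⟨rfl, ?_, rfl, by rw [e4], ?_, ?_, rfl⟩ <;>
    simp only [trSL, Matrix.SpecialLinearGroup.coe_mul, Matrix.SpecialLinearGroup.coe_inv,
      Matrix.trace_fin_two, Matrix.mul_apply, Fin.sum_univ_two, Matrix.adjugate_fin_two,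
      Matrix.of_apply, Matrix.cons_val', Matrix.cons_val_zero, Matrix.cons_val_one,
      Matrix.head_cons, Matrix.head_fin_const, Matrix.empty_val', Matrix.cons_val_fin_one,
      ← ha1, ← hb1, ← hc1, ← hd1, ← ha2, ← hb2, ← hc2, ← hd2, ← ha3, ← hb3, ← hc3, ← hd3]
  · linear_combination (d1 + a1) * hdet
  · linear_combination (d1 * d2 + c1 * b2 + b1 * c2 + a1 * a2) * hdet
  · linear_combination (d1 * a3 - c1 * b3 - b1 * c3 + a1 * d3) * hdet
end

section
/- For any θ ∈ ℂ, the function y(t) = √t is a solution of the Painlevé VI equation with parameters α = θ₁²/2, β = −θ₁²/2, γ = θ²/2, δ = (1−θ²)/2 (corresponding to θ₂ = θ₃ = θ and θ₁ + θ₄ = 1): explicitly, y(t)=t^{1/2} satisfies y'' = (1/2)(1/y + 1/(y−1) + 1/(y−t))(y')² − (1/t + 1/(t−1) + 1/(y−t))y' + (y(y−1)(y−t)/(t²(t−1)²))(α + βt/y² + γ(t−1)/(y−1)² + δt(t−1)/(y−t)²). -/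
/-- The Painlevé VI equation, as a relation on the values `y, t` and the first and second
derivatives `y', y''` of a solution. -/
def PVI (α β γ δ y t y' y'' : ℂ) : Prop :=
  y'' = (1/2) * (1/y + 1/(y-1) + 1/(y-t)) * y'^2
      - (1/t + 1/(t-1) + 1/(y-t)) * y'
      + (y*(y-1)*(y-t) / (t^2*(t-1)^2)) *
          (α + β*t/y^2 + γ*(t-1)/(y-1)^2 + δ*t*(t-1)/(y-t)^2)

theorem deriv_sqrt' {t : ℝ} (ht0 : 0 < t) : deriv Real.sqrt t = 1 / (2 * Real.sqrt t) :=
  (Real.hasDerivAt_sqrt ht0.ne').deriv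

theorem deriv2_sqrt' {t : ℝ} (ht0 : 0 < t) :
    deriv (deriv Real.sqrt) t = -(1 / (4 * t * Real.sqrt t)) := by
  have h1 : deriv Real.sqrt =ᶠ[nhds t] fun x => 1/2 * (Real.sqrt x)⁻¹ := by
    filter_upwards [eventually_ne_nhds ht0.ne'] with x hx
    rw [(Real.hasDerivAt_sqrt hx).deriv]; ring
  rw [h1.deriv_eq]
  have h2 : HasDerivAt (fun x => 1/2 * (Real.sqrt x)⁻¹)
      (1/2 * (-(1/(2*Real.sqrt t)) / (Real.sqrt t)^2)) t :=
    ((Real.hasDerivAt_sqrt ht0.ne').inv (Real.sqrt_ne_zero'.2 ht0)).const_mul (1/2)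
  rw [h2.deriv, Real.sq_sqrt ht0.le]
  have hs : Real.sqrt t ≠ 0 := Real.sqrt_ne_zero'.2 ht0
  field_simp
  ring

theorem PVI_sqrt_key (θ θ₁ s : ℂ) (hs0 : s ≠ 0) (hs1 : s - 1 ≠ 0) (hsn1 : s + 1 ≠ 0) :
  -(1/(4*s^2*s)) = 1/2 * (1/s + 1/(s-1) + 1/(s - s^2)) * (1/(2*s))^2
    - (1/s^2 + 1/(s^2-1) + 1/(s-s^2))*(1/(2*s))
    + (s*(s-1)*(s-s^2)/((s^2)^2*(s^2-1)^2)) *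
        (θ₁^2/2 + (-θ₁^2/2)*s^2/s^2 + θ^2/2*(s^2-1)/(s-1)^2
          + (1-θ^2)/2*s^2*(s^2-1)/(s-s^2)^2) := by
  have h1s : (1:ℂ) - s ≠ 0 := fun h => hs1 (by linear_combination -h)
  have hst : s - s^2 ≠ 0 := by
    rw [show s - s^2 = s*(1-s) by ring]; exact mul_ne_zero hs0 h1s
  have h2 : s^2 - 1 ≠ 0 := by
    rw [show s^2-1 = (s-1)*(s+1) by ring]; exact mul_ne_zero hs1 hsn1
  have hA : 1/s + 1/(s-1) + 1/(s - s^2) = 2/s := by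
    field_simp
    ring
  have hB : 1/s^2 + 1/(s^2-1) + 1/(s-s^2) = (s^2-s-1)/(s^2*(s^2-1)) := by
    rw [div_add_div _ _ (pow_ne_zero 2 hs0) h2,
      div_add_div _ _ (mul_ne_zero (pow_ne_zero 2 hs0) h2) hst,
      div_eq_div_iff (mul_ne_zero (mul_ne_zero (pow_ne_zero 2 hs0) h2) hst)
        (mul_ne_zero (pow_ne_zero 2 hs0) h2)]
    ring
  have hC : θ₁^2/2 + (-θ₁^2/2)*s^2/s^2 + θ^2/2*(s^2-1)/(s-1)^2
      + (1-θ^2)/2*s^2*(s^2-1)/(s-s^2)^2 = (1/2)*(s+1)/(s-1) := by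
    rw [show θ₁^2/2 + (-θ₁^2/2)*s^2/s^2 = 0 by field_simp; ring, zero_add,
      show s - s^2 = s*(1-s) by ring]
    field_simp
    ring
  rw [hA, hB, hC, show s - s^2 = s*(1-s) by ring, show s^2 - 1 = (s-1)*(s+1) by ring]
  have hD : -(s^6*8) + s^8*8 ≠ 0 := by
    rw [show -(s^6*8)+s^8*8 = 8*s^6*((s-1)*(s+1)) by ring]
    exact mul_ne_zero (mul_ne_zero (by norm_num) (pow_ne_zero _ hs0)) (mul_ne_zero hs1 hsn1)
  field_simp
  ring

/-- For any `θ, θ₁ ∈ ℂ`, the function `y(t) = √t` solves Painlevé VI with parameters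
`α = θ₁²/2`, `β = −θ₁²/2`, `γ = θ²/2`, `δ = (1−θ²)/2` (corresponding to
`θ₂ = θ₃ = θ` and `θ₁ + θ₄ = 1`). -/
theorem sqrt_solves_PVI (θ θ₁ : ℂ) (t : ℝ) (ht0 : 0 < t) (ht1 : t ≠ 1)
    (hy0 : Real.sqrt t ≠ 0) (hy1 : Real.sqrt t ≠ 1) (hyt : Real.sqrt t ≠ t) :
    PVI (θ₁^2/2) (-θ₁^2/2) (θ^2/2) ((1-θ^2)/2)
      ((Real.sqrt t : ℝ) : ℂ) ((t : ℝ) : ℂ)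
      ((deriv Real.sqrt t : ℝ) : ℂ)
      ((deriv (deriv Real.sqrt) t : ℝ) : ℂ) := by
  rw [deriv_sqrt' ht0, deriv2_sqrt' ht0]
  unfold PVI
  set s : ℂ := (Real.sqrt t : ℂ) with hsdef
  have hT : (t : ℂ) = s^2 := by
    rw [hsdef, ← Complex.ofReal_pow, Real.sq_sqrt ht0.le]
  have hs0 : s ≠ 0 := Complex.ofReal_ne_zero.2 hy0
  have hs1 : s - 1 ≠ 0 := sub_ne_zero.2 (by
    intro h; exact hy1 (by exact_mod_cast hsdef ▸ h))
  have hsn1 : s + 1 ≠ 0 := by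
    intro h
    have hs : s = -1 := by linear_combination h
    have : (t : ℂ) = 1 := by rw [hT, hs]; ring
    exact ht1 (by exact_mod_cast this)
  push_cast
  rw [hT]
  exact PVI_sqrt_key θ θ₁ s hs0 hs1 hsn1
end
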